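/- Let n be a positive integer, ε_1,…,ε_n and τ positive reals, and F_1,…,F_n : ℝ → ℝ continuous. Let I ⊆ ℝ be a compact interval invariant under F = F_1∘F_2∘⋯∘F_n, i.e. F(I) ⊆ I, and define I_n = F_n(I) and I_k = F_k(I_{k+1}) for k = n−1,…,2. Let (x_1,…,x_n) solve the system ε_j x_j′(t) = −x_j(t) + F_j(x_{j+1}(t)) for 1 ≤ j ≤ n−1 and ε_n x_n′(t) = −x_n(t) + F_n(x_1(t−τ)) for t > 0, with x_1 continuous on [−τ,∞). If x_1(s) ∈ I for all s ∈ [−τ,0] and x_k(0) ∈ I_k for k = 2,…,n, then x_1(t) ∈ I and x_k(t) ∈ I_k for k = 2,…,n and all t ≥ 0. -/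

import Mathlib

/-- `tailChain F k m = F k ∘ F (k+1) ∘ ⋯ ∘ F (k+m-1)` (applying `F (k+m-1)` first). -/
def tailChain (F : ℕ → ℝ → ℝ) : ℕ → ℕ → ℝ → ℝ
  | _, 0 => id
  | k, m + 1 => F k ∘ tailChain F (k + 1) m

/-- A solution of the cyclic system in singular-perturbation form:
`εⱼ xⱼ'(t) = -xⱼ(t) + Fⱼ(x_{j+1}(t))` for `j+1 < n` and
`ε_{n-1} x_{n-1}'(t) = -x_{n-1}(t) + F_{n-1}(x₀(t-τ))` for `t > 0`,
with `x 0` continuous on `[-τ, ∞)` and all components continuous on `[0, ∞)`. -/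
def IsSingPertSolution (n : ℕ) (ε : ℕ → ℝ) (τ : ℝ) (F : ℕ → ℝ → ℝ)
    (x : ℕ → ℝ → ℝ) : Prop :=
  ContinuousOn (x 0) (Set.Ici (-τ)) ∧
  (∀ j < n, ContinuousOn (x j) (Set.Ici (0 : ℝ))) ∧
  ∀ t : ℝ, 0 < t →
    (∀ j : ℕ, j + 1 < n →
      HasDerivAt (x j) ((-x j t + F j (x (j + 1) t)) / ε j) t) ∧
    HasDerivAt (x (n - 1)) ((-x (n - 1) t + F (n - 1) (x 0 (t - τ))) / ε (n - 1)) t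

/-!
Each component obeys `ε y' = -y + g` with `ε > 0`, so it relaxes towards its forcing `g`: if `g`
stays in a compact interval containing `y 0`, so does `y` (multiply `y - b` by `exp (t / ε)`).
On a window `[0, T]` on which the delayed history `x₁(t - τ)` is already known to lie in `I`,
this propagates down the cycle: `x_n ∈ F_n(I) = I_n`, then `x_{n-1} ∈ F_{n-1}(I_n) = I_{n-1}`, …,
and finally `x₁` is driven by `F₁(x₂) ∈ F(I) ⊆ I`. Windows `[0, mτ]` then cover all `t ≥ 0`.
-/

open Set

theorem continuous_tailChain (F : ℕ → ℝ → ℝ) (k m : ℕ)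
    (hF : ∀ j ∈ Ico k (k + m), Continuous (F j)) : Continuous (tailChain F k m) := by
  induction m generalizing k with
  | zero => exact continuous_id
  | succ m ih =>
    refine (hF k ⟨le_rfl, by omega⟩).comp (ih (k + 1) fun j hj => hF j ?_)
    exact ⟨by grind, by grind⟩

theorem image_tailChain_sub_eq_image_image (F : ℕ → ℝ → ℝ) {n k : ℕ} (hk : k < n) (s : Set ℝ) :
    tailChain F k (n - k) '' s = F k '' (tailChain F (k + 1) (n - (k + 1)) '' s) := by
  obtain ⟨m, hm, hm'⟩ : ∃ m, n - k = m + 1 ∧ n - (k + 1) = m := ⟨n - (k + 1), by omega, rfl⟩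
  rw [hm, hm', ← image_comp]
  rfl

theorem le_of_hasDerivAt_relaxation {ε T b : ℝ} {y g : ℝ → ℝ} (hε : 0 < ε)
    (hy : ContinuousOn y (Icc 0 T))
    (hy' : ∀ t ∈ Ioo 0 T, HasDerivAt y ((-y t + g t) / ε) t)
    (hg : ∀ t ∈ Ioo 0 T, g t ≤ b) (h0 : y 0 ≤ b) : ∀ t ∈ Icc 0 T, y t ≤ b := by
  set w : ℝ → ℝ := fun t => Real.exp (t / ε) * (y t - b)
  have hw' : ∀ t ∈ Ioo 0 T, HasDerivAt w (Real.exp (t / ε) * ((g t - b) / ε)) t := by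
    intro t ht
    have hexp : HasDerivAt (fun s => Real.exp (s / ε)) (Real.exp (t / ε) * (1 / ε)) t := by
      simpa using ((hasDerivAt_id t).div_const ε).exp
    refine (hexp.mul ((hy' t ht).sub_const b)).congr_deriv ?_
    field_simp
    ring
  have hanti : AntitoneOn w (Icc 0 T) := by
    refine antitoneOn_of_hasDerivWithinAt_nonpos (convex_Icc 0 T)
      (f' := fun t => Real.exp (t / ε) * ((g t - b) / ε))
      ((Real.continuous_exp.comp (continuous_id.div_const ε)).continuousOn.mul
        (hy.sub continuousOn_const)) (fun t ht => ?_) (fun t ht => ?_)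
    · rw [interior_Icc] at ht ⊢
      exact (hw' t ht).hasDerivWithinAt
    · rw [interior_Icc] at ht
      exact mul_nonpos_of_nonneg_of_nonpos (Real.exp_pos _).le
        (div_nonpos_of_nonpos_of_nonneg (sub_nonpos.mpr (hg t ht)) hε.le)
  intro t ht
  have hwt : w t ≤ w 0 := hanti ⟨le_rfl, ht.1.trans ht.2⟩ ht ht.1
  have hw0 : w 0 ≤ 0 := by simp only [w, zero_div, Real.exp_zero, one_mul]; linarith
  exact sub_nonpos.mp (nonpos_of_mul_nonpos_right (hwt.trans hw0) (Real.exp_pos _))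

theorem mapsTo_Icc_of_hasDerivAt_relaxation {ε T a b : ℝ} {y g : ℝ → ℝ} (hε : 0 < ε)
    (hy : ContinuousOn y (Icc 0 T))
    (hy' : ∀ t ∈ Ioo 0 T, HasDerivAt y ((-y t + g t) / ε) t)
    (hg : ∀ t ∈ Ioo 0 T, g t ∈ Icc a b) (h0 : y 0 ∈ Icc a b) : MapsTo y (Icc 0 T) (Icc a b) := by
  intro t ht
  refine ⟨?_, le_of_hasDerivAt_relaxation hε hy hy' (fun s hs => (hg s hs).2) h0.2 t ht⟩
  have := le_of_hasDerivAt_relaxation (y := fun s => -y s) (g := fun s => -g s) (b := -a) hε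
    hy.neg (fun s hs => (hy' s hs).neg.congr_deriv (by ring))
    (fun s hs => neg_le_neg (hg s hs).1) (neg_le_neg h0.1) t ht
  linarith

/-- The paper's convention `x_{n+1}(t) = x₁(t - τ)`, which makes the last equation of the cycle
look like the others. -/
noncomputable def cyclicInput (n : ℕ) (τ : ℝ) (x : ℕ → ℝ → ℝ) (k : ℕ) (t : ℝ) : ℝ :=
  if k < n then x k t else x 0 (t - τ)

namespace IsSingPertSolution

variable {n : ℕ} {ε : ℕ → ℝ} {τ : ℝ} {F : ℕ → ℝ → ℝ} {x : ℕ → ℝ → ℝ}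

theorem hasDerivAt_cyclicInput (hx : IsSingPertSolution n ε τ F x) {k : ℕ} (hk : k < n)
    {t : ℝ} (ht : 0 < t) :
    HasDerivAt (x k) ((-x k t + F k (cyclicInput n τ x (k + 1) t)) / ε k) t := by
  by_cases hk1 : k + 1 < n
  · simpa only [cyclicInput, if_pos hk1] using (hx.2.2 t ht).1 k hk1
  · obtain rfl : k = n - 1 := by omega
    simpa only [cyclicInput, if_neg hk1] using (hx.2.2 t ht).2

theorem mem_of_history_mem (hx : IsSingPertSolution n ε τ F x) (hn : 0 < n)
    (hε : ∀ j < n, 0 < ε j) (hF : ∀ j < n, Continuous (F j)) {c d : ℝ} (hcd : c ≤ d)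
    (hinv : tailChain F 0 n '' Icc c d ⊆ Icc c d)
    (hxk : ∀ k : ℕ, 1 ≤ k → k < n → x k 0 ∈ tailChain F k (n - k) '' Icc c d)
    (hx00 : x 0 0 ∈ Icc c d) (T : ℝ) (hhist : ∀ s ∈ Icc (-τ) (T - τ), x 0 s ∈ Icc c d) :
    ∀ t ∈ Icc 0 T, x 0 t ∈ Icc c d ∧
      ∀ k : ℕ, 1 ≤ k → k < n → x k t ∈ tailChain F k (n - k) '' Icc c d := by
  set I : ℕ → Set ℝ := fun k => tailChain F k (n - k) '' Icc c d
  have hI : ∀ k, I k = Icc (sInf (I k)) (sSup (I k)) := fun k =>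
    ContinuousOn.image_Icc hcd
      (continuous_tailChain F k _ fun j hj => hF j (by grind)).continuousOn
  have hI_succ : ∀ k < n, I k = F k '' I (k + 1) := fun k hk =>
    image_tailChain_sub_eq_image_image F hk _
  have hcont : ∀ k < n, ContinuousOn (x k) (Icc 0 T) :=
    fun k hk => (hx.2.1 k hk).mono Icc_subset_Ici_self
  have hinput : ∀ k (hk : k ≤ n), 1 ≤ k → MapsTo (cyclicInput n τ x k) (Icc 0 T) (I k) := by
    intro k hk
    induction hk using Nat.decreasingInduction with
    | self =>
      intro _ t ht
      rw [cyclicInput, if_neg (lt_irrefl n)]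
      simpa only [I, Nat.sub_self, tailChain, image_id] using
        hhist (t - τ) ⟨by linarith [ht.1], by linarith [ht.2]⟩
    | of_succ k hk ih =>
      intro hk1 t ht
      have hforce : ∀ s ∈ Ioo 0 T, F k (cyclicInput n τ x (k + 1) s) ∈ I k := fun s hs =>
        hI_succ k hk ▸ mem_image_of_mem _ (ih (by omega) (Ioo_subset_Icc_self hs))
      have hinit : x k 0 ∈ I k := hxk k hk1 hk
      rw [hI k] at hforce hinit ⊢
      rw [cyclicInput, if_pos hk]
      exact mapsTo_Icc_of_hasDerivAt_relaxation (hε k hk) (hcont k hk)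
        (fun s hs => hx.hasDerivAt_cyclicInput hk hs.1) hforce hinit ht
  intro t ht
  refine ⟨?_, fun k hk1 hk => ?_⟩
  · have hforce : ∀ s ∈ Ioo 0 T, F 0 (cyclicInput n τ x 1 s) ∈ Icc c d := fun s hs =>
      hinv (show _ ∈ I 0 from
        hI_succ 0 hn ▸ mem_image_of_mem _ (hinput 1 hn le_rfl (Ioo_subset_Icc_self hs)))
    exact mapsTo_Icc_of_hasDerivAt_relaxation (hε 0 hn) (hcont 0 hn)
      (fun s hs => hx.hasDerivAt_cyclicInput hn hs.1) hforce hx00 ht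
  · simpa only [cyclicInput, if_pos hk] using hinput k hk.le hk1 ht

end IsSingPertSolution

/-- Lemma (invariance): if the compact interval `I = [c,d]` is invariant under
`F = F₁∘⋯∘Fₙ` and the initial data lie in `I` and in the image intervals
`I_k = (F_k∘⋯∘F_n)(I)`, then the solution stays in these sets for all `t ≥ 0`. -/
theorem invariance_of_interval_chain
    (n : ℕ) (hn : 0 < n) (ε : ℕ → ℝ) (hε : ∀ j < n, 0 < ε j)
    (τ : ℝ) (hτ : 0 < τ) (F : ℕ → ℝ → ℝ) (hF : ∀ j < n, Continuous (F j))
    (c d : ℝ) (hcd : c ≤ d)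
    (hinv : tailChain F 0 n '' Set.Icc c d ⊆ Set.Icc c d)
    (x : ℕ → ℝ → ℝ) (hx : IsSingPertSolution n ε τ F x)
    (hx0 : ∀ s ∈ Set.Icc (-τ) (0 : ℝ), x 0 s ∈ Set.Icc c d)
    (hxk : ∀ k : ℕ, 1 ≤ k → k < n →
      x k 0 ∈ tailChain F k (n - k) '' Set.Icc c d) :
    ∀ t : ℝ, 0 ≤ t →
      x 0 t ∈ Set.Icc c d ∧
      ∀ k : ℕ, 1 ≤ k → k < n →
        x k t ∈ tailChain F k (n - k) '' Set.Icc c d := by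
  have step := hx.mem_of_history_mem hn hε hF hcd hinv hxk (hx0 0 ⟨by linarith, le_rfl⟩)
  have hhist : ∀ m : ℕ, ∀ s ∈ Icc (-τ) (m * τ), x 0 s ∈ Icc c d := by
    intro m
    induction m with
    | zero => simpa using hx0
    | succ m ih =>
      intro s hs
      rcases le_or_gt s 0 with hs0 | hs0
      · exact hx0 s ⟨hs.1, hs0⟩
      · refine (step _ (fun r hr => ih r ⟨hr.1, ?_⟩) s ⟨hs0.le, hs.2⟩).1
        push_cast at hr
        linarith [hr.2]
  intro t ht
  obtain ⟨m, hm⟩ := exists_nat_ge (t / τ)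
  have htm : t ≤ m * τ := (div_le_iff₀ hτ).mp hm
  exact step t (fun s hs => hhist m s ⟨hs.1, by linarith [hs.2]⟩) t ⟨ht, le_rfl⟩
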